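/- Let F : A → Set(ℝ^n) be a multivalued map on A ⊆ ℝ^n satisfying the strict acute angle condition: ⟪x, y⟫ > 0 for all x ∈ A and y ∈ F(x). If A is a radian ε-net for some 0 < ε < π/2 and additionally angle(x, y) < π/2 − ε for all x ∈ A, y ∈ F(x), then F satisfies the strict coacute angle condition: for every nonzero v ∈ ℝ^n there exists x ∈ A with ⟪y, v⟫ > 0 for all y ∈ F(x). -/

import Mathlib

open Real InnerProductGeometry
open scoped InnerProductSpace

/-!
If `x = t • u'` is the point of the net near the direction of `v` and `y ∈ F x`, the triangle
inequality for angles gives `angle y v ≤ angle y x + angle u' v < (π / 2 - ε) + ε = π / 2`.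
-/

theorem InnerProductGeometry.inner_pos_of_angle_lt_pi_div_two {V : Type*}
    [NormedAddCommGroup V] [InnerProductSpace ℝ V] {x y : V} (h : angle x y < π / 2) :
    0 < ⟪x, y⟫_ℝ := by
  rw [angle, arccos_lt_pi_div_two, div_pos_iff] at h
  rcases h with ⟨hinner, -⟩ | ⟨-, hnorm⟩
  · exact hinner
  · exact absurd hnorm (not_lt.2 (by positivity))

theorem stmt15_general {n : ℕ} (ε : ℝ)
    (A : Set (EuclideanSpace ℝ (Fin n)))
    (F : EuclideanSpace ℝ (Fin n) → Set (EuclideanSpace ℝ (Fin n)))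
    (hnet : ∀ u : EuclideanSpace ℝ (Fin n), ‖u‖ = 1 →
      ∃ u' : EuclideanSpace ℝ (Fin n), ‖u'‖ = 1 ∧ angle u u' < ε ∧ ∃ t : ℝ, 0 < t ∧ t • u' ∈ A)
    (hangle : ∀ x ∈ A, ∀ y ∈ F x, angle x y < π / 2 - ε) :
    ∀ v : EuclideanSpace ℝ (Fin n), v ≠ 0 → ∃ x ∈ A, ∀ y ∈ F x, 0 < ⟪y, v⟫_ℝ := by
  intro v hv
  obtain ⟨u', -, hvu', t, ht, hxA⟩ :=
    hnet (NormedSpace.normalize v) (NormedSpace.norm_normalize hv)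
  refine ⟨t • u', hxA, fun y hy => inner_pos_of_angle_lt_pi_div_two ?_⟩
  calc angle y v ≤ angle y (t • u') + angle (t • u') v := angle_le_angle_add_angle _ _ _
    _ = angle (t • u') y + angle (NormedSpace.normalize v) u' := by
      rw [angle_comm y, angle_smul_left_of_pos u' v ht, angle_normalize_left, angle_comm v]
    _ < π / 2 - ε + ε := add_lt_add (hangle _ hxA y hy) hvu'
    _ = π / 2 := sub_add_cancel _ _

/-- The ε-acute angle condition on a radian ε-net implies the strict coacute
angle condition. -/
theorem stmt15 {n : ℕ} (ε : ℝ) (hε : 0 < ε) (hε' : ε < π / 2)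
    (A : Set (EuclideanSpace ℝ (Fin n)))
    (F : EuclideanSpace ℝ (Fin n) → Set (EuclideanSpace ℝ (Fin n)))
    (hacute : ∀ x ∈ A, ∀ y ∈ F x, 0 < ⟪x, y⟫_ℝ)
    (hnet : ∀ u : EuclideanSpace ℝ (Fin n), ‖u‖ = 1 →
      ∃ u' : EuclideanSpace ℝ (Fin n), ‖u'‖ = 1 ∧ angle u u' < ε ∧ ∃ t : ℝ, 0 < t ∧ t • u' ∈ A)
    (hangle : ∀ x ∈ A, ∀ y ∈ F x, angle x y < π / 2 - ε) :
    ∀ v : EuclideanSpace ℝ (Fin n), v ≠ 0 → ∃ x ∈ A, ∀ y ∈ F x, 0 < ⟪y, v⟫_ℝ :=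
  stmt15_general ε A F hnet hangle
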